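/- arXiv:2603.29870 — 5 statements merged into one kernel-verified Lean document; each statement's English description precedes it below -/
import Mathlib

section
/- Let X ⊆ ℝ^n be a compact convex set with diameter D_X, let g : ℝ^n → ℝ^n be any map (representing the gradient field x ↦ ∇_x L(x,y)), and for σ > 0 define G^PO(x) = (1/σ)·‖P_X(x - σ g(x)) - x‖ where P_X is the Euclidean projection onto X, and G^LMO(x) = max_{v ∈ X} g(x)ᵀ(x - v). Then for every x ∈ X, G^LMO(x) ≤ (σ‖g(x)‖ + D_X) · G^PO(x). -/
open RealInnerProductSpace

/-- If `p = P_X(x - σ g(x))` is the Euclidean projection (characterized by the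
variational inequality), then the LMO gap `max_{v ∈ X} g(x)ᵀ(x - v)` is bounded
by `(σ‖g(x)‖ + D_X) · G^PO(x)` with `G^PO(x) = (1/σ)‖p - x‖`. -/
theorem lmo_gap_le_po_gap (n : ℕ) (X : Set (EuclideanSpace ℝ (Fin n)))
    (hXne : X.Nonempty) (hXcomp : IsCompact X) (hXconv : Convex ℝ X)
    (DX : ℝ) (hD : ∀ u ∈ X, ∀ v ∈ X, ‖u - v‖ ≤ DX)
    (g : EuclideanSpace ℝ (Fin n) → EuclideanSpace ℝ (Fin n))
    (σ : ℝ) (hσ : 0 < σ) (x : EuclideanSpace ℝ (Fin n)) (hx : x ∈ X)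
    (p : EuclideanSpace ℝ (Fin n)) (hp : p ∈ X)
    (hproj : ∀ v ∈ X, 0 ≤ ⟪p - (x - σ • g x), v - p⟫) :
    ∀ v ∈ X, ⟪g x, x - v⟫ ≤ (σ * ‖g x‖ + DX) * ((1 / σ) * ‖p - x‖) := by
  intro v hv
  have h1 := hproj v hv
  have hexp : ⟪p - (x - σ • g x), v - p⟫
      = ⟪p - x, v - p⟫ + σ * ⟪g x, v - p⟫ := by
    rw [show p - (x - σ • g x) = (p - x) + σ • g x by abel, inner_add_left,
      real_inner_smul_left]
  have h2 : σ * ⟪g x, p - v⟫ ≤ ⟪p - x, v - p⟫ := by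
    have : ⟪g x, p - v⟫ = - ⟪g x, v - p⟫ := by
      rw [← inner_neg_right]; congr 1; abel
    rw [hexp] at h1; rw [this]; nlinarith
  have h3 : ⟪p - x, v - p⟫ ≤ ‖p - x‖ * ‖v - p‖ := real_inner_le_norm _ _
  have h4 : ‖v - p‖ ≤ DX := hD v hv p hp
  have h5 : ⟪g x, x - p⟫ ≤ ‖g x‖ * ‖x - p‖ := real_inner_le_norm _ _
  have h6 : ‖x - p‖ = ‖p - x‖ := norm_sub_rev _ _
  have hsplit : ⟪g x, x - v⟫ = ⟪g x, x - p⟫ + ⟪g x, p - v⟫ := by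
    rw [← inner_add_right]; congr 1; abel
  have hnn : (0:ℝ) ≤ ‖p - x‖ := norm_nonneg _
  have key : σ * ⟪g x, x - v⟫ ≤ (σ * ‖g x‖ + DX) * ‖p - x‖ := by
    have hA : σ * ⟪g x, x - p⟫ ≤ σ * (‖g x‖ * ‖x - p‖) :=
      mul_le_mul_of_nonneg_left h5 hσ.le
    have hB : ‖p - x‖ * ‖v - p‖ ≤ ‖p - x‖ * DX :=
      mul_le_mul_of_nonneg_left h4 hnn
    rw [hsplit]; rw [h6] at hA; nlinarith
  rw [show (σ * ‖g x‖ + DX) * ((1 / σ) * ‖p - x‖)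
      = ((σ * ‖g x‖ + DX) * ‖p - x‖) / σ by field_simp]
  rw [le_div_iff₀ hσ]
  linarith [key]
end

section
/- Let X ⊆ ℝ^n be a nonempty compact convex set, g : ℝ^n → ℝ^n a map, σ > 0, and define G^PO(x) = (1/σ)·‖P_X(x - σ g(x)) - x‖ and G^LMO(x) = max_{v ∈ X} g(x)ᵀ(x - v). Then for every x ∈ X, G^PO(x) ≤ √(G^LMO(x)/σ). -/
open RealInnerProductSpace

/-- If `p = P_X(x - σ g(x))` is the Euclidean projection (characterized by the
variational inequality), then `G^PO(x) = (1/σ)‖p - x‖` satisfies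
`G^PO(x) ≤ √(G^LMO(x)/σ)` where `G^LMO(x) = max_{v ∈ X} g(x)ᵀ(x - v)`. -/
theorem po_gap_le_sqrt_lmo_gap (n : ℕ) (X : Set (EuclideanSpace ℝ (Fin n)))
    (hXne : X.Nonempty) (hXcomp : IsCompact X) (hXconv : Convex ℝ X)
    (g : EuclideanSpace ℝ (Fin n) → EuclideanSpace ℝ (Fin n))
    (σ : ℝ) (hσ : 0 < σ) (x : EuclideanSpace ℝ (Fin n)) (hx : x ∈ X)
    (p : EuclideanSpace ℝ (Fin n)) (hp : p ∈ X)
    (hproj : ∀ v ∈ X, 0 ≤ ⟪p - (x - σ • g x), v - p⟫) :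
    (1 / σ) * ‖p - x‖ ≤
      Real.sqrt (sSup ((fun v => ⟪g x, x - v⟫) '' X) / σ) := by
  set S := sSup ((fun v => ⟪g x, x - v⟫) '' X) with hS
  have hbdd : BddAbove ((fun v => ⟪g x, x - v⟫) '' X) := by
    apply (hXcomp.image ?_).bddAbove
    exact Continuous.inner continuous_const (continuous_const.sub continuous_id)
  have hle : ∀ v ∈ X, ⟪g x, x - v⟫ ≤ S :=
    fun v hv => le_csSup hbdd ⟨v, hv, rfl⟩
  have hkey : ‖p - x‖ ^ 2 ≤ σ * ⟪g x, x - p⟫ := by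
    have h := hproj x hx
    have hexp : ⟪p - (x - σ • g x), x - p⟫
        = -‖p - x‖ ^ 2 + σ * ⟪g x, x - p⟫ := by
      have : p - (x - σ • g x) = (p - x) + σ • g x := by abel
      rw [this, inner_add_left, inner_smul_left, show (x - p : EuclideanSpace ℝ (Fin n)) = -(p - x) by abel,
        inner_neg_right, real_inner_self_eq_norm_sq]
      simp only [starRingEnd_apply, star_trivial, inner_neg_right]
    linarith [h.trans_eq hexp]
  have hS0 : 0 ≤ S := by
    have := hle x hx
    simpa using (le_trans (by simp) this)
  have hSp : ⟪g x, x - p⟫ ≤ S := hle p hp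
  rw [show (1 / σ) * ‖p - x‖ = ‖p - x‖ / σ by ring]
  rw [Real.le_sqrt (by positivity)]
  rw [div_pow, div_le_div_iff₀ (by positivity) hσ]
  have : ‖p - x‖ ^ 2 ≤ σ * S := hkey.trans (by nlinarith)
  nlinarith [sq_nonneg σ]
  exact div_nonneg hS0 hσ.le
end

section
/- Let Y ⊆ ℝ^m be compact convex with diameter D_Y, y_0 ∈ Y, μ ≥ 0, and for β ≥ 0 with β + μ > 0 suppose L(x,·) is μ-strongly concave and continuous on Y, so that L_β(x,y) := L(x,y) − (β/2)‖y−y_0‖² has a unique maximizer y*_β(x) over Y. Then for any β_{t+1} ≤ β_t (both with β+μ > 0): ‖y*_{β_t}(x) − y*_{β_{t+1}}(x)‖ ≤ 2 D_Y (β_t − β_{t+1}) / (β_{t+1} + μ). -/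
/-!
Subtracting `(β/2)‖· - y₀‖²` turns a `μ`-strongly concave function into a `(μ + β)`-strongly
concave one, and a strongly concave function falls off quadratically from its maximizer on a
convex set. Applied to the `β_{t+1}`-objective at `y1`, this bounds `(β_{t+1} + μ)/2 ‖y1 - y2‖²`
by its gap, which (since `y1` maximizes the `β_t`-objective) is at most
`(β_t - β_{t+1})/2 (‖y2 - y0‖² - ‖y1 - y0‖²) ≤ (β_t - β_{t+1}) D_Y ‖y1 - y2‖`.
-/

open Filter Set

section NormedSpace

variable {E : Type*} [NormedAddCommGroup E] [NormedSpace ℝ E] {s : Set E} {f : E → ℝ} {m : ℝ}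

lemma strongConcaveOn_of_forall_le (hs : Convex ℝ s)
    (h : ∀ x ∈ s, ∀ y ∈ s, ∀ t : ℝ, 0 ≤ t → t ≤ 1 →
      t * f x + (1 - t) * f y + m / 2 * t * (1 - t) * ‖x - y‖ ^ 2 ≤ f (t • x + (1 - t) • y)) :
    StrongConcaveOn s m f := by
  refine ⟨hs, fun x hx y hy a b ha _ hab => ?_⟩
  obtain rfl : b = 1 - a := eq_sub_of_add_eq' hab
  have := h x hx y hy a ha (by linarith)
  simp only [smul_eq_mul]
  linarith

lemma StrongConcaveOn.add_half_mul_sq_norm_sub_le_of_isMaxOn (hf : StrongConcaveOn s m f)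
    {x y : E} (hx : x ∈ s) (hmax : IsMaxOn f s x) (hy : y ∈ s) :
    f y + m / 2 * ‖y - x‖ ^ 2 ≤ f x := by
  set q := m / 2 * ‖y - x‖ ^ 2 with hq
  have hstep : ∀ t ∈ Ioc (0 : ℝ) 1, f y + (1 - t) * q ≤ f x := by
    rintro t ⟨ht0, ht1⟩
    have hconc := hf.2 hy hx ht0.le (sub_nonneg.2 ht1) (add_sub_cancel t 1)
    have hle : f (t • y + (1 - t) • x) ≤ f x :=
      hmax (hf.1 hy hx ht0.le (sub_nonneg.2 ht1) (add_sub_cancel t 1))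
    simp only [smul_eq_mul, ← hq] at hconc
    refine le_of_mul_le_mul_left ?_ ht0
    linarith
  have hcont : Continuous fun t : ℝ => f y + (1 - t) * q := by fun_prop
  have hlim := (hcont.tendsto' 0 (f y + q) (by simp)).mono_left (nhdsWithin_le_nhds (s := Ioi 0))
  exact le_of_tendsto hlim (mem_of_superset (Ioc_mem_nhdsGT one_pos) hstep)

end NormedSpace

section InnerProductSpace

variable {E : Type*} [NormedAddCommGroup E] [InnerProductSpace ℝ E] {s : Set E} {f : E → ℝ}
  {m : ℝ}

lemma strongConcaveOn_neg_half_mul_sq_norm_sub (hs : Convex ℝ s) (β : ℝ) (c : E) :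
    StrongConcaveOn s β fun x => -(β / 2 * ‖x - c‖ ^ 2) := by
  rw [strongConcaveOn_iff_convex]
  refine (((β • innerSL ℝ c : E →L[ℝ] ℝ).toLinearMap.concaveOn hs).add_const
    (-(β / 2 * ‖c‖ ^ 2))).congr fun x _ => ?_
  simp [norm_sub_sq_real, real_inner_comm]
  ring

lemma StrongConcaveOn.sub_half_mul_sq_norm_sub (hf : StrongConcaveOn s m f) (β : ℝ) (c : E) :
    StrongConcaveOn s (m + β) fun x => f x - β / 2 * ‖x - c‖ ^ 2 :=
  (hf.add (strongConcaveOn_neg_half_mul_sq_norm_sub hf.1 β c)).mono fun r =>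
    le_of_eq (by simp only [Pi.add_apply]; ring)

end InnerProductSpace

lemma sq_norm_sub_sq_norm_le {F : Type*} [SeminormedAddCommGroup F] {a b : F} {D : ℝ}
    (ha : ‖a‖ ≤ D) (hb : ‖b‖ ≤ D) : ‖a‖ ^ 2 - ‖b‖ ^ 2 ≤ 2 * D * ‖a - b‖ :=
  calc ‖a‖ ^ 2 - ‖b‖ ^ 2 = (‖a‖ + ‖b‖) * (‖a‖ - ‖b‖) := by ring
    _ ≤ (‖a‖ + ‖b‖) * ‖a - b‖ := by gcongr; exact norm_sub_norm_le a b
    _ ≤ 2 * D * ‖a - b‖ := by gcongr; linarith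

theorem best_response_drift_general (m : ℕ)
    (Y : Set (EuclideanSpace ℝ (Fin m)))
    (hYconv : Convex ℝ Y)
    (DY : ℝ) (hD : ∀ u ∈ Y, ∀ v ∈ Y, ‖u - v‖ ≤ DY)
    (y0 : EuclideanSpace ℝ (Fin m)) (hy0 : y0 ∈ Y)
    (μ : ℝ)
    (L : EuclideanSpace ℝ (Fin m) → ℝ)
    (hLsc : ∀ y ∈ Y, ∀ y' ∈ Y, ∀ ξ : ℝ, 0 ≤ ξ → ξ ≤ 1 →
      ξ * L y + (1 - ξ) * L y' + (μ / 2) * ξ * (1 - ξ) * ‖y - y'‖ ^ 2 ≤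
        L (ξ • y + (1 - ξ) • y'))
    (βt βt1 : ℝ) (hββ : βt1 ≤ βt) (hpos1 : 0 < βt1 + μ)
    (y1 : EuclideanSpace ℝ (Fin m)) (hy1 : y1 ∈ Y)
    (hy1max : ∀ y ∈ Y, L y - (βt / 2) * ‖y - y0‖ ^ 2 ≤
      L y1 - (βt / 2) * ‖y1 - y0‖ ^ 2)
    (y2 : EuclideanSpace ℝ (Fin m)) (hy2 : y2 ∈ Y)
    (hy2max : ∀ y ∈ Y, L y - (βt1 / 2) * ‖y - y0‖ ^ 2 ≤
      L y2 - (βt1 / 2) * ‖y2 - y0‖ ^ 2) :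
    ‖y1 - y2‖ ≤ 2 * DY * (βt - βt1) / (βt1 + μ) := by
  have hconc : StrongConcaveOn Y (μ + βt1) fun y => L y - βt1 / 2 * ‖y - y0‖ ^ 2 :=
    (strongConcaveOn_of_forall_le hYconv hLsc).sub_half_mul_sq_norm_sub βt1 y0
  have hgrowth := hconc.add_half_mul_sq_norm_sub_le_of_isMaxOn hy2 (isMaxOn_iff.2 hy2max) hy1
  have hsq := sq_norm_sub_sq_norm_le (hD y2 hy2 y0 hy0) (hD y1 hy1 y0 hy0)
  rw [sub_sub_sub_cancel_right, norm_sub_rev y2 y1] at hsq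
  have hDY : 0 ≤ DY := (norm_nonneg _).trans (hD y0 hy0 y0 hy0)
  have hdrift : (βt1 + μ) / 2 * ‖y1 - y2‖ ^ 2 ≤ (βt - βt1) * DY * ‖y1 - y2‖ := by
    nlinarith [hy1max y2 hy2]
  rw [le_div_iff₀ hpos1]
  rcases (norm_nonneg (y1 - y2)).eq_or_lt with hd | hd
  · rw [← hd]
    nlinarith
  · nlinarith

/-- Drift of the regularized best response as the smoothing parameter decreases:
if `y₁` maximizes `L(x,·) − (β_t/2)‖·−y₀‖²` and `y₂` maximizes
`L(x,·) − (β_{t+1}/2)‖·−y₀‖²` over `Y`, with `β_{t+1} ≤ β_t`, then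
`‖y₁ − y₂‖ ≤ 2 D_Y (β_t − β_{t+1})/(β_{t+1} + μ)`. -/
theorem best_response_drift (m : ℕ)
    (Y : Set (EuclideanSpace ℝ (Fin m)))
    (hYne : Y.Nonempty) (hYcomp : IsCompact Y) (hYconv : Convex ℝ Y)
    (DY : ℝ) (hD : ∀ u ∈ Y, ∀ v ∈ Y, ‖u - v‖ ≤ DY)
    (y0 : EuclideanSpace ℝ (Fin m)) (hy0 : y0 ∈ Y)
    (μ : ℝ) (hμ : 0 ≤ μ)
    (L : EuclideanSpace ℝ (Fin m) → ℝ) (hLcont : ContinuousOn L Y)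
    (hLsc : ∀ y ∈ Y, ∀ y' ∈ Y, ∀ ξ : ℝ, 0 ≤ ξ → ξ ≤ 1 →
      ξ * L y + (1 - ξ) * L y' + (μ / 2) * ξ * (1 - ξ) * ‖y - y'‖ ^ 2 ≤
        L (ξ • y + (1 - ξ) • y'))
    (βt βt1 : ℝ) (hβ1 : 0 ≤ βt1) (hββ : βt1 ≤ βt)
    (hpos1 : 0 < βt1 + μ) (hpos : 0 < βt + μ)
    (y1 : EuclideanSpace ℝ (Fin m)) (hy1 : y1 ∈ Y)
    (hy1max : ∀ y ∈ Y, L y - (βt / 2) * ‖y - y0‖ ^ 2 ≤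
      L y1 - (βt / 2) * ‖y1 - y0‖ ^ 2)
    (y2 : EuclideanSpace ℝ (Fin m)) (hy2 : y2 ∈ Y)
    (hy2max : ∀ y ∈ Y, L y - (βt1 / 2) * ‖y - y0‖ ^ 2 ≤
      L y2 - (βt1 / 2) * ‖y2 - y0‖ ^ 2) :
    ‖y1 - y2‖ ≤ 2 * DY * (βt - βt1) / (βt1 + μ) :=
  best_response_drift_general m Y hYconv DY hD y0 hy0 μ L hLsc βt βt1 hββ hpos1 y1 hy1 hy1max y2 hy2
    hy2max
end

section
/- Let Y be a compact convex subset of ℝ^m with diameter D_Y, fix x, and let h : ℝ^m → ℝ be concave, differentiable, with L-Lipschitz gradient on Y (L > 0), attaining its maximum over Y at y*. Given y ∈ Y, set H = h(y*) − h(y), let u ∈ argmin_{v ∈ Y} (−∇h(y))ᵀv and γ = min{ ∇h(y)ᵀ(u−y) / (L‖u−y‖²), 1 } (with γ = 1 if u = y), and y⁺ = y + γ(u − y). Then h(y*) − h(y⁺) ≤ max{ 1/2, 1 − H/(2 L D_Y²) } · H. -/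
/-!
Concavity gives `H ≤ ⟪∇h(y), y* - y⟫ ≤ ⟪∇h(y), u - y⟫ =: G`, and the Lipschitz gradient gives the
quadratic lower bound `h(y + t(u - y)) ≥ h(y) + tG - (L/2)t²‖u - y‖²` along the segment. The
closed-loop stepsize maximizes this bound over `t ∈ [0, 1]`, gaining at least `G/2` (full step) or
`G²/(2L‖u - y‖²) ≥ H²/(2LD_Y²)` (short step).
-/

open RealInnerProductSpace Classical

theorem add_mul_sub_le_of_hasDerivAt {φ φ' : ℝ → ℝ} {a K t : ℝ} (ht : 0 ≤ t)
    (hφ : ∀ s ∈ Set.Icc 0 t, HasDerivAt φ (φ' s) s)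
    (hφ' : ∀ s ∈ Set.Ioo 0 t, a - K * s ≤ φ' s) :
    φ 0 + a * t - K / 2 * t ^ 2 ≤ φ t := by
  have hψ : ∀ s ∈ Set.Icc 0 t,
      HasDerivAt (fun s => φ s - a * s + K / 2 * s ^ 2) (φ' s - a + K * s) s := by
    intro s hs
    refine (((hφ s hs).sub ((hasDerivAt_id' s).const_mul a)).add
      ((hasDerivAt_pow 2 s).const_mul (K / 2))).congr_deriv ?_
    ring
  have hmono : MonotoneOn (fun s => φ s - a * s + K / 2 * s ^ 2) (Set.Icc 0 t) := by
    refine monotoneOn_of_deriv_nonneg (convex_Icc 0 t)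
      (fun s hs => (hψ s hs).continuousAt.continuousWithinAt)
      (fun s hs => (hψ s (interior_subset hs)).differentiableAt.differentiableWithinAt)
      (fun s hs => ?_)
    rw [interior_Icc] at hs
    rw [(hψ s (Set.Ioo_subset_Icc_self hs)).deriv]
    linarith [hφ' s hs]
  have := hmono (Set.left_mem_Icc.mpr ht) (Set.right_mem_Icc.mpr ht) ht
  simp only [mul_zero, sub_zero, ne_eq, OfNat.ofNat_ne_zero, not_false_eq_true, zero_pow,
    add_zero] at this
  linarith

section InnerProductSpace

variable {E : Type*} [NormedAddCommGroup E] [InnerProductSpace ℝ E] [CompleteSpace E]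
  {f : E → ℝ} {g : E → E} {s : Set E}

theorem HasGradientAt.hasDerivAt_comp_add_smul {f' x v : E} {t : ℝ}
    (hf : HasGradientAt f f' (x + t • v)) :
    HasDerivAt (fun τ : ℝ => f (x + τ • v)) ⟪f', v⟫ t := by
  have hline : HasDerivAt (fun τ : ℝ => x + τ • v) v t := by
    simpa using ((hasDerivAt_id t).smul_const v).const_add x
  simpa [InnerProductSpace.toDual_apply_apply, real_inner_comm, Function.comp_def] using
    hf.hasFDerivAt.comp_hasDerivAt t hline

theorem ConcaveOn.sub_le_inner_of_hasGradientAt {f' x y : E} (hf : ConcaveOn ℝ s f)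
    (hx : x ∈ s) (hy : y ∈ s) (hgrad : HasGradientAt f f' x) :
    f y - f x ≤ ⟪f', y - x⟫ := by
  have hline : (f ∘ AffineMap.lineMap x y) = fun τ : ℝ => f (x + τ • (y - x)) := by
    funext τ
    simp only [Function.comp_apply, AffineMap.lineMap_apply_module', add_comm]
  have hconc := hf.comp_affineMap (AffineMap.lineMap x y)
  rw [hline] at hconc
  have hderiv : HasDerivAt (fun τ : ℝ => f (x + τ • (y - x))) ⟪f', y - x⟫ 0 :=
    HasGradientAt.hasDerivAt_comp_add_smul (by simpa using hgrad)
  simpa [slope_def_field] using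
    hconc.slope_le_of_hasDerivAt (x := 0) (y := 1) (by simpa using hx) (by simpa using hy)
      one_pos hderiv

theorem Convex.add_mul_inner_sub_le_of_lipschitz_gradient {L t : ℝ} {x y : E} (hs : Convex ℝ s)
    (hgrad : ∀ a ∈ s, HasGradientAt f (g a) a)
    (hlip : ∀ a ∈ s, ∀ b ∈ s, ‖g a - g b‖ ≤ L * ‖a - b‖)
    (hx : x ∈ s) (hy : y ∈ s) (ht : t ∈ Set.Icc 0 1) :
    f x + t * ⟪g x, y - x⟫ - L / 2 * t ^ 2 * ‖y - x‖ ^ 2 ≤ f (x + t • (y - x)) := by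
  have hmem : ∀ τ ∈ Set.Icc (0 : ℝ) t, x + τ • (y - x) ∈ s := fun τ hτ =>
    hs.add_smul_sub_mem hx hy ⟨hτ.1, hτ.2.trans ht.2⟩
  have key := add_mul_sub_le_of_hasDerivAt (φ := fun τ : ℝ => f (x + τ • (y - x)))
    (φ' := fun τ => ⟪g (x + τ • (y - x)), y - x⟫) (a := ⟪g x, y - x⟫)
    (K := L * ‖y - x‖ ^ 2) ht.1
    (fun τ hτ => (hgrad _ (hmem τ hτ)).hasDerivAt_comp_add_smul) (fun τ hτ => ?_)
  · simp only [zero_smul, add_zero] at key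
    linarith
  · have hlipτ : ‖g (x + τ • (y - x)) - g x‖ ≤ L * (τ * ‖y - x‖) := by
      simpa [norm_smul, abs_of_pos hτ.1] using
        hlip _ (hmem τ (Set.Ioo_subset_Icc_self hτ)) x hx
    have hcs : -(‖g (x + τ • (y - x)) - g x‖ * ‖y - x‖) ≤ ⟪g (x + τ • (y - x)) - g x, y - x⟫ :=
      neg_le_of_abs_le (abs_real_inner_le_norm _ _)
    rw [inner_sub_left] at hcs
    nlinarith [norm_nonneg (y - x)]

end InnerProductSpace

theorem min_half_sq_div_le_mul_sub {G q : ℝ} (hq : 0 < q) :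
    min (G / 2) (G ^ 2 / (2 * q)) ≤ min (G / q) 1 * G - q / 2 * min (G / q) 1 ^ 2 := by
  rcases le_total (G / q) 1 with hshort | hlong
  · rw [min_eq_left hshort]
    calc min (G / 2) (G ^ 2 / (2 * q)) ≤ G ^ 2 / (2 * q) := min_le_right _ _
      _ = G / q * G - q / 2 * (G / q) ^ 2 := by field_simp; ring
  · rw [min_eq_right hlong]
    have hqG : q ≤ G := by rwa [one_le_div hq] at hlong
    calc min (G / 2) (G ^ 2 / (2 * q)) ≤ G / 2 := min_le_left _ _
      _ ≤ 1 * G - q / 2 * 1 ^ 2 := by linarith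

theorem sub_min_half_sq_div_le_max_mul {H G q C : ℝ} (hH : 0 ≤ H) (hHG : H ≤ G) (hq : 0 < q)
    (hqC : q ≤ C) :
    H - min (G / 2) (G ^ 2 / (2 * q)) ≤ max (1 / 2) (1 - H / (2 * C)) * H := by
  rcases min_cases (G / 2) (G ^ 2 / (2 * q)) with ⟨hmin, -⟩ | ⟨hmin, -⟩ <;> rw [hmin]
  · calc H - G / 2 ≤ 1 / 2 * H := by linarith
      _ ≤ max (1 / 2) (1 - H / (2 * C)) * H := by gcongr; exact le_max_left _ _
  · have hC : 0 < C := hq.trans_le hqC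
    have hsq : H ^ 2 / (2 * C) ≤ G ^ 2 / (2 * q) := by gcongr
    calc H - G ^ 2 / (2 * q) ≤ (1 - H / (2 * C)) * H := by
          have : (1 - H / (2 * C)) * H = H - H ^ 2 / (2 * C) := by field_simp
          linarith
      _ ≤ max (1 / 2) (1 - H / (2 * C)) * H := by gcongr; exact le_max_right _ _

theorem fw_one_step_contraction_general (m : ℕ)
    (Y : Set (EuclideanSpace ℝ (Fin m)))
    (hYconv : Convex ℝ Y)
    (DY : ℝ) (hD : ∀ u ∈ Y, ∀ v ∈ Y, ‖u - v‖ ≤ DY)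
    (h : EuclideanSpace ℝ (Fin m) → ℝ)
    (g : EuclideanSpace ℝ (Fin m) → EuclideanSpace ℝ (Fin m))
    (hgrad : ∀ y, HasGradientAt h (g y) y)
    (hconc : ConcaveOn ℝ Y h)
    (L : ℝ) (hL : 0 < L)
    (hlip : ∀ a ∈ Y, ∀ b ∈ Y, ‖g a - g b‖ ≤ L * ‖a - b‖)
    (ystar : EuclideanSpace ℝ (Fin m)) (hystar : ystar ∈ Y)
    (hmax : ∀ y' ∈ Y, h y' ≤ h ystar)
    (y : EuclideanSpace ℝ (Fin m)) (hy : y ∈ Y)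
    (u : EuclideanSpace ℝ (Fin m)) (hu : u ∈ Y)
    (hulmo : ∀ v ∈ Y, ⟪g y, v⟫ ≤ ⟪g y, u⟫)
    (γ : ℝ)
    (hγ : γ = if u = y then 1 else min (⟪g y, u - y⟫ / (L * ‖u - y‖ ^ 2)) 1) :
    h ystar - h (y + γ • (u - y)) ≤
      max (1 / 2) (1 - (h ystar - h y) / (2 * L * DY ^ 2)) * (h ystar - h y) := by
  have hH : 0 ≤ h ystar - h y := sub_nonneg.mpr (hmax y hy)
  have hHG : h ystar - h y ≤ ⟪g y, u - y⟫ :=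
    calc h ystar - h y ≤ ⟪g y, ystar - y⟫ :=
          hconc.sub_le_inner_of_hasGradientAt hy hystar (hgrad y)
      _ ≤ ⟪g y, u - y⟫ := by
          simpa only [inner_sub_right, sub_le_sub_iff_right] using hulmo ystar hystar
  by_cases huy : u = y
  · subst huy
    have hH0 : h ystar - h u = 0 := le_antisymm (by simpa using hHG) hH
    simp [hH0]
  rw [if_neg huy] at hγ
  set G := ⟪g y, u - y⟫
  have hq : 0 < L * ‖u - y‖ ^ 2 := by
    have : 0 < ‖u - y‖ := norm_pos_iff.mpr (sub_ne_zero.mpr huy)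
    positivity
  have hqC : L * ‖u - y‖ ^ 2 ≤ L * DY ^ 2 :=
    mul_le_mul_of_nonneg_left (pow_le_pow_left₀ (norm_nonneg _) (hD u hu y hy) 2) hL.le
  have hγ01 : γ ∈ Set.Icc 0 1 :=
    hγ ▸ ⟨le_min (div_nonneg (hH.trans hHG) hq.le) zero_le_one, min_le_right _ _⟩
  have hdescent := hYconv.add_mul_inner_sub_le_of_lipschitz_gradient
    (fun a _ => hgrad a) hlip hy hu hγ01
  have hgain := min_half_sq_div_le_mul_sub (G := G) hq
  rw [← hγ] at hgain
  calc h ystar - h (y + γ • (u - y))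
      ≤ (h ystar - h y) - min (G / 2) (G ^ 2 / (2 * (L * ‖u - y‖ ^ 2))) := by linarith
    _ ≤ _ := by
      rw [mul_assoc 2 L]
      exact sub_min_half_sq_div_le_max_mul hH hHG hq hqC

/-- One-step contraction of Frank–Wolfe with closed-loop stepsize for concave
maximization of an `L`-smooth function over a compact convex set:
`h(y*) − h(y⁺) ≤ max{1/2, 1 − H/(2LD_Y²)}·H` where `H = h(y*) − h(y)`. -/
theorem fw_one_step_contraction (m : ℕ)
    (Y : Set (EuclideanSpace ℝ (Fin m)))
    (hYne : Y.Nonempty) (hYcomp : IsCompact Y) (hYconv : Convex ℝ Y)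
    (DY : ℝ) (hD : ∀ u ∈ Y, ∀ v ∈ Y, ‖u - v‖ ≤ DY)
    (h : EuclideanSpace ℝ (Fin m) → ℝ)
    (g : EuclideanSpace ℝ (Fin m) → EuclideanSpace ℝ (Fin m))
    (hgrad : ∀ y, HasGradientAt h (g y) y)
    (hconc : ConcaveOn ℝ Y h)
    (L : ℝ) (hL : 0 < L)
    (hlip : ∀ a ∈ Y, ∀ b ∈ Y, ‖g a - g b‖ ≤ L * ‖a - b‖)
    (ystar : EuclideanSpace ℝ (Fin m)) (hystar : ystar ∈ Y)
    (hmax : ∀ y' ∈ Y, h y' ≤ h ystar)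
    (y : EuclideanSpace ℝ (Fin m)) (hy : y ∈ Y)
    (u : EuclideanSpace ℝ (Fin m)) (hu : u ∈ Y)
    (hulmo : ∀ v ∈ Y, ⟪g y, v⟫ ≤ ⟪g y, u⟫)
    (γ : ℝ)
    (hγ : γ = if u = y then 1 else min (⟪g y, u - y⟫ / (L * ‖u - y‖ ^ 2)) 1) :
    h ystar - h (y + γ • (u - y)) ≤
      max (1 / 2) (1 - (h ystar - h y) / (2 * L * DY ^ 2)) * (h ystar - h y) :=
  fw_one_step_contraction_general m Y hYconv DY hD h g hgrad hconc L hL hlip ystar hystar hmax y hy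
    u hu hulmo γ hγ
end

section
/- Let Y ⊆ ℝ^m be α-strongly convex (α > 0): for all y, y' ∈ Y, ξ ∈ [0,1], and unit vectors z, the point ξy + (1−ξ)y' + ξ(1−ξ)(α/2)‖y−y'‖² z lies in Y. Fix y, u ∈ Y and a vector g with g ≠ 0, and let w be the unit vector with wᵀg = ‖g‖. Then the point p := (1/2)(y + u) + (α/8)‖y − u‖² w belongs to Y, and consequently gᵀ(u' − y) ≥ (1/2) gᵀ(u − y) + (α/8)‖y − u‖² ‖g‖ for any u' ∈ argmax_{v ∈ Y} gᵀv satisfying gᵀu' ≥ gᵀu. -/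
open RealInnerProductSpace

/-- Key geometric estimate for α-strongly convex sets: the perturbed midpoint
`p = (y+u)/2 + (α/8)‖y−u‖² w` (with `w` the unit vector aligned with `g`)
belongs to `Y`, and the LMO output `u'` satisfies the improved linear gap
lower bound. -/
theorem strongly_convex_set_midpoint (m : ℕ)
    (Y : Set (EuclideanSpace ℝ (Fin m)))
    (α : ℝ) (hα : 0 < α)
    (hscY : ∀ y ∈ Y, ∀ y' ∈ Y, ∀ ξ : ℝ, 0 ≤ ξ → ξ ≤ 1 →
      ∀ z : EuclideanSpace ℝ (Fin m), ‖z‖ = 1 →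
        ξ • y + (1 - ξ) • y' + (ξ * (1 - ξ) * (α / 2) * ‖y - y'‖ ^ 2) • z ∈ Y)
    (y u : EuclideanSpace ℝ (Fin m)) (hy : y ∈ Y) (hu : u ∈ Y)
    (g : EuclideanSpace ℝ (Fin m)) (hg : g ≠ 0)
    (w : EuclideanSpace ℝ (Fin m)) (hw : ‖w‖ = 1) (hwg : ⟪w, g⟫ = ‖g‖) :
    ((1 / 2 : ℝ) • (y + u) + ((α / 8) * ‖y - u‖ ^ 2) • w ∈ Y) ∧
    ∀ u' ∈ Y, (∀ v ∈ Y, ⟪g, v⟫ ≤ ⟪g, u'⟫) → ⟪g, u⟫ ≤ ⟪g, u'⟫ →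
      (1 / 2) * ⟪g, u - y⟫ + (α / 8) * ‖y - u‖ ^ 2 * ‖g‖ ≤ ⟪g, u' - y⟫ := by
  have hmem : ((1 / 2 : ℝ) • (y + u) + ((α / 8) * ‖y - u‖ ^ 2) • w ∈ Y) := by
    have h := hscY y hy u hu (1/2) (by norm_num) (by norm_num) w hw
    have : ((1:ℝ)/2 * (1 - 1/2) * (α / 2) * ‖y - u‖ ^ 2) = (α / 8) * ‖y - u‖ ^ 2 := by
      ring
    rw [this] at h
    have heq : (1/2 : ℝ) • y + (1 - 1/2 : ℝ) • u = (1/2 : ℝ) • (y + u) := by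
      rw [smul_add]; norm_num
    rwa [heq] at h
  refine ⟨hmem, fun u' hu' hmax hgu ↦ ?_⟩
  have hle := hmax _ hmem
  have hgw : ⟪g, w⟫ = ‖g‖ := by rw [real_inner_comm]; exact hwg
  rw [inner_add_right, inner_smul_right, inner_smul_right, inner_add_right, hgw] at hle
  rw [inner_sub_right, inner_sub_right]
  nlinarith [hle, hgu]
end
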